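/- arXiv:1602.04605 — 3 statements merged into one kernel-verified Lean document; each statement's English description precedes it below -/
import Mathlib

section
/- (Two-source outer bound, Theorem 1, part R ⊆ R_o.) For every achievable triple (μ, R1, R2) there exist finitely supported random variables U and V, jointly distributed with (X, Z), such that U–X–Z and X–Z–V are Markov chains and R1 ≥ I(U; X), R2 ≥ I(V; Z), and μ ≤ I(U; X) + I(V; Z) − I((U,V); (X,Z)). -/
open scoped BigOperators Classical

namespace Biclustering

variable {α β γ σ : Type*}

/-- A probability mass function on a finite type. -/
def IsPMF [Fintype α] (p : α → ℝ) : Prop := (∀ a, 0 ≤ p a) ∧ ∑ a, p a = 1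

/-- Shannon entropy (in nats) of a pmf on a finite type. -/
noncomputable def ent [Fintype α] (p : α → ℝ) : ℝ := - ∑ a, p a * Real.log (p a)

/-- Pushforward (distribution of `f` under `p`). -/
noncomputable def pmap [Fintype α] (f : α → β) (p : α → ℝ) : β → ℝ :=
  fun b => ∑ a, if f a = b then p a else 0

/-- Entropy of the random variable `f` under the joint pmf `p`. -/
noncomputable def Hof [Fintype α] [Fintype β] (p : α → ℝ) (f : α → β) : ℝ := ent (pmap f p)

/-- Mutual information `I(f; g)` under the joint pmf `p`. -/
noncomputable def MI [Fintype α] [Fintype β] [Fintype γ] (p : α → ℝ) (f : α → β) (g : α → γ) : ℝ :=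
  Hof p f + Hof p g - Hof p (fun a => (f a, g a))

/-- `f` and `g` are conditionally independent given `m` (a Markov chain `f – m – g`). -/
def CondIndep [Fintype α] (p : α → ℝ) (f : α → β) (g : α → γ) (m : α → σ) : Prop :=
  ∀ b c s, pmap (fun a => (f a, g a, m a)) p (b, c, s) * pmap m p s
    = pmap (fun a => (f a, m a)) p (b, s) * pmap (fun a => (g a, m a)) p (c, s)

/-- The pmf of `n` i.i.d. copies of a source with pmf `p`. -/
noncomputable def iid [Fintype α] (n : ℕ) (p : α → ℝ) : (Fin n → α) → ℝ :=
  fun x => ∏ i, p (x i)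

variable {𝒳 𝒵 : Type}

/-- `(μ, R1, R2)` is achievable for the two-source biclustering problem with source pmf `p`:
for some blocklength `n` there is an `(n, R1, R2)` code `(f, g)` whose normalized
co-information is at least `μ`. -/
def Achievable [Fintype 𝒳] [Fintype 𝒵] (p : 𝒳 × 𝒵 → ℝ) (μ R1 R2 : ℝ) : Prop :=
  ∃ (n M1 M2 : ℕ), 0 < n ∧
    Real.log M1 ≤ n * R1 ∧ Real.log M2 ≤ n * R2 ∧
    ∃ (f : (Fin n → 𝒳) → Fin M1) (g : (Fin n → 𝒵) → Fin M2),
      μ ≤ (MI (iid n p) (fun ω => f (fun i => (ω i).1)) (fun ω => g (fun i => (ω i).2))) / n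

/-!
Given a code `(f, g)` of blocklength `n`, let `Q` be a time index uniform on `Fin n` and
independent of the source block, and put `X = X_Q`, `Z = Z_Q`, `U = (f(Xⁿ), X_{<Q}, Q)`,
`V = (g(Zⁿ), Z_{<Q}, Q)`. Given `X_Q`, the variable `U` is a function of `Q` and of the letters at
the other times, which are independent of `(X_Q, Z_Q)`; this gives both Markov chains.
With `A k = H(f(Xⁿ), X_{<k})`, the chain rule for the uniform `Q` gives
`H(U) = log n + (∑_{k<n} A k) / n` and `H(U, X) = log n + (∑_{k<n} A (k+1)) / n`, so
`I(U; X) = H(X) + (A 0 - A n) / n = H(f(Xⁿ)) / n` because `A n = H(Xⁿ) = n H(X)`. In the same way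
`I(V; Z) = H(g(Zⁿ)) / n` and `I(UV; XZ) = H(f(Xⁿ), g(Zⁿ)) / n`, so the rate bounds come from
`H(f(Xⁿ)) ≤ log |M₁|` and the bound on `μ` is the achievability of `(μ, R1, R2)` itself.
-/

open Function Real

section Pushforward

variable [Fintype α] [Fintype β]

lemma pmap_pmap (p : α → ℝ) (f : α → β) (g : β → γ) :
    pmap g (pmap f p) = pmap (fun a => g (f a)) p := by
  funext c
  simp only [pmap, ← Finset.sum_filter]
  rw [Finset.sum_comm' (t' := Finset.univ.filter fun a => g (f a) = c)
    (s' := fun a => {f a})]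
  · simp
  · intro b a
    simp only [Finset.mem_filter, Finset.mem_univ, true_and, Finset.mem_singleton]
    constructor
    · rintro ⟨hc, rfl⟩; exact ⟨rfl, hc⟩
    · rintro ⟨rfl, hc⟩; exact ⟨hc, rfl⟩

lemma pmap_equiv_eq (e : α ≃ β) {P : β → ℝ} {Q : α → ℝ} (h : ∀ a, P (e a) = Q a) :
    pmap e Q = P := by
  funext b
  simp only [pmap, ← h]
  rw [e.sum_comp (fun b' => if b' = b then P b' else 0)]
  simp

lemma sum_pmap (p : α → ℝ) (f : α → β) : ∑ b, pmap f p b = ∑ a, p a := by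
  simp only [pmap]
  rw [Finset.sum_comm]
  simp

lemma IsPMF.pmap {p : α → ℝ} (hp : IsPMF p) (f : α → β) : IsPMF (pmap f p) :=
  ⟨fun b => Finset.sum_nonneg fun a _ => by split_ifs <;> simp [hp.1 a], by rw [sum_pmap, hp.2]⟩

end Pushforward

lemma IsPMF.nonempty [Fintype α] {p : α → ℝ} (hp : IsPMF p) : Nonempty α := by
  by_contra h
  have := hp.2
  simp [not_nonempty_iff.1 h] at this

section Entropy

variable [Fintype α] [Fintype β] [Fintype γ]

lemma ent_eq_sum_negMulLog (p : α → ℝ) : ent p = ∑ a, negMulLog (p a) := by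
  simp [ent, negMulLog, Finset.sum_neg_distrib]

lemma ent_pmap_of_injective {e : β → γ} (he : Injective e) (q : β → ℝ) :
    ent (pmap e q) = ent q := by
  have hrange : ∀ b, pmap e q (e b) = q b := fun b => by simp [pmap, he.eq_iff]
  simp only [ent_eq_sum_negMulLog]
  rw [← Finset.sum_subset (Finset.subset_univ (Finset.univ.map ⟨e, he⟩)), Finset.sum_map]
  · simp [hrange]
  · intro c _ hc
    have : pmap e q c = 0 :=
      Finset.sum_eq_zero fun b _ => if_neg fun h => hc (by simp [← h])
    simp [this]

lemma Hof_pmap (p : α → ℝ) (f : α → β) (g : β → γ) :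
    Hof (pmap f p) g = Hof p (fun a => g (f a)) := by
  simp only [Hof, pmap_pmap]

lemma Hof_comp_injective (p : α → ℝ) (f : α → β) {e : β → γ} (he : Injective e) :
    Hof p (fun a => e (f a)) = Hof p f := by
  rw [Hof, ← pmap_pmap, ent_pmap_of_injective he, Hof]

lemma Hof_eq_of_inverse {p : α → ℝ} {f : α → β} {g : α → γ} (e : β → γ) (d : γ → β)
    (he : ∀ a, g a = e (f a)) (hd : ∀ a, f a = d (g a)) : Hof p f = Hof p g := by
  have hf : Hof p (fun a => (f a, g a)) = Hof p f := by
    simp only [he]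
    exact Hof_comp_injective p f (e := fun b => (b, e b)) fun _ _ h => congrArg Prod.fst h
  have hg : Hof p (fun a => (f a, g a)) = Hof p g := by
    conv_lhs => simp only [hd]
    exact Hof_comp_injective p g (e := fun c => (d c, c)) fun _ _ h => congrArg Prod.snd h
  rw [← hf, hg]

lemma MI_pmap {δ ε : Type*} [Fintype δ] [Fintype ε] (P : α → ℝ) (Φ : α → β)
    (f : β → δ) (g : β → ε) :
    MI (pmap Φ P) f g = MI P (fun a => f (Φ a)) (fun a => g (Φ a)) := by
  simp only [MI, Hof_pmap]

lemma MI_eq_of_inverse_left {δ : Type*} [Fintype δ] {p : α → ℝ} {f : α → β} {g : α → γ}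
    (h : α → δ) (e : β → γ) (d : γ → β) (he : ∀ a, g a = e (f a)) (hd : ∀ a, f a = d (g a)) :
    MI p f h = MI p g h := by
  rw [MI, MI, Hof_eq_of_inverse e d he hd,
    Hof_eq_of_inverse (f := fun a => (f a, h a)) (g := fun a => (g a, h a))
      (fun t => (e t.1, t.2)) (fun t => (d t.1, t.2)) (by simp [he]) (by simp [hd])]

lemma ent_le_log_card {q : β → ℝ} (hq : IsPMF q) : ent q ≤ log (Fintype.card β) := by
  have hN : (0 : ℝ) < Fintype.card β := by
    have := hq.nonempty
    exact_mod_cast Fintype.card_pos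
  have hJensen := concaveOn_negMulLog.le_map_sum (t := Finset.univ)
    (w := fun _ => (Fintype.card β : ℝ)⁻¹) (p := q) (fun _ _ => by positivity)
    (by simp [hN.ne']) (fun b _ => Set.mem_Ici.2 (hq.1 b))
  simp only [smul_eq_mul, ← Finset.mul_sum, hq.2, mul_one] at hJensen
  rw [ent_eq_sum_negMulLog]
  rw [negMulLog, log_inv] at hJensen
  field_simp at hJensen
  linarith

end Entropy

section Memoryless

variable [Fintype α] [Fintype β]

lemma sum_iid (n : ℕ) (p : α → ℝ) : ∑ ω, iid n p ω = (∑ a, p a) ^ n :=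
  (Fintype.sum_pow p n).symm

lemma IsPMF.iid {p : α → ℝ} (hp : IsPMF p) (n : ℕ) : IsPMF (iid n p) :=
  ⟨fun _ => Finset.prod_nonneg fun _ _ => hp.1 _, by rw [sum_iid, hp.2, one_pow]⟩

lemma ent_prod {q : α → ℝ} {r : β → ℝ} (hq : ∑ a, q a = 1) (hr : ∑ b, r b = 1) :
    ent (fun x : α × β => q x.1 * r x.2) = ent q + ent r := by
  simp only [ent_eq_sum_negMulLog, negMulLog_mul, Fintype.sum_prod_type, Finset.sum_add_distrib,
    ← Finset.mul_sum, ← Finset.sum_mul, hq, hr, one_mul]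

lemma ent_iid {p : α → ℝ} (hp : ∑ a, p a = 1) (n : ℕ) : ent (iid n p) = n * ent p := by
  induction n with
  | zero => simp [ent, iid]
  | succ n ih =>
    have hcons : ∀ x : α × (Fin n → α), iid (n + 1) p (Fin.consEquiv (fun _ => α) x)
        = p x.1 * iid n p x.2 := fun x => by simp [iid, Fin.prod_univ_succ]
    rw [ent_eq_sum_negMulLog, ← (Fin.consEquiv fun _ => α).sum_comp]
    simp only [hcons, ← ent_eq_sum_negMulLog]
    rw [ent_prod hp (by rw [sum_iid, hp, one_pow]), ih]
    push_cast
    ring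

lemma pmap_iid (n : ℕ) (p : α → ℝ) (c : α → β) :
    pmap (fun ω (j : Fin n) => c (ω j)) (iid n p) = iid n (pmap c p) := by
  funext ξ
  simp only [iid, pmap, Fintype.prod_sum, Fintype.prod_ite_zero, funext_iff]
  congr!

end Memoryless

section Markov

variable [Fintype α] {δ : Type*}

lemma condIndep_pmap_iff [Fintype β] (P : α → ℝ) (Φ : α → β) (f : β → γ) (g : β → δ)
    (m : β → σ) :
    CondIndep (pmap Φ P) f g m ↔
      CondIndep P (fun a => f (Φ a)) (fun a => g (Φ a)) (fun a => m (Φ a)) := by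
  simp only [CondIndep, pmap_pmap]

lemma CondIndep.symm {p : α → ℝ} {f : α → β} {g : α → γ} {m : α → σ}
    (h : CondIndep p f g m) : CondIndep p g f m := by
  intro c b s
  have hswap : pmap (fun a => (g a, f a, m a)) p (c, b, s)
      = pmap (fun a => (f a, g a, m a)) p (b, c, s) := by
    simp only [pmap, Prod.mk.injEq, and_left_comm]
  rw [hswap, h b c s, mul_comm]

lemma condIndep_of_factorization [Fintype β] [Fintype γ] {p : α → ℝ} {f : α → β} {g : α → γ}
    {m : α → σ} (u : β → σ → ℝ) (v : γ → σ → ℝ)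
    (h : ∀ b c s, pmap (fun a => (f a, g a, m a)) p (b, c, s) = u b s * v c s) :
    CondIndep p f g m := by
  intro b c s
  have hfm : pmap (fun a => (f a, m a)) p (b, s)
      = ∑ c, pmap (fun a => (f a, g a, m a)) p (b, c, s) := by
    simp only [pmap]
    rw [Finset.sum_comm]
    simp [Prod.ext_iff, ite_and]
  have hgm : pmap (fun a => (g a, m a)) p (c, s)
      = ∑ b, pmap (fun a => (f a, g a, m a)) p (b, c, s) := by
    simp only [pmap]
    rw [Finset.sum_comm]
    simp [Prod.ext_iff, ite_and]
  have hm : pmap m p s = ∑ b, ∑ c, pmap (fun a => (f a, g a, m a)) p (b, c, s) := by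
    simp only [pmap]
    simp_rw [Finset.sum_comm (γ := γ), Finset.sum_comm (γ := β)]
    simp [Prod.ext_iff, ite_and]
  simp only [hfm, hgm, hm, h, ← Finset.mul_sum, ← Finset.sum_mul]
  ring

lemma condIndep_of_independent_noise {κ S T U : Type*} [Fintype κ] [Fintype S] [Fintype U]
    [Fintype δ] (ν : κ → ℝ) (p : S → ℝ) (F : κ → T → U) (c : S → T) (d : S → δ) :
    CondIndep (fun w : κ × S => ν w.1 * p w.2)
      (fun w => F w.1 (c w.2)) (fun w => d w.2) (fun w => c w.2) := by
  refine condIndep_of_factorization (fun x t => pmap (fun k => F k t) ν x)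
    (fun z t => pmap (fun s => (d s, c s)) p (z, t)) fun x z t => ?_
  simp only [pmap, Fintype.sum_prod_type, Finset.sum_mul_sum]
  refine Finset.sum_congr rfl fun k _ => Finset.sum_congr rfl fun s _ => ?_
  by_cases hs : c s = t
  · subst hs
    by_cases hF : F k (c s) = x <;> simp [hF]
  · simp [hs]

end Markov

section TimeSharing

variable {Ω : Type*} [Fintype Ω]

noncomputable def timeSharing (n : ℕ) (P : Ω → ℝ) : Ω × Fin n → ℝ := fun w => P w.1 / n

lemma IsPMF.timeSharing {P : Ω → ℝ} (hP : IsPMF P) {n : ℕ} (hn : 0 < n) :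
    IsPMF (timeSharing n P) := by
  refine ⟨fun w => div_nonneg (hP.1 w.1) n.cast_nonneg, ?_⟩
  simp [Biclustering.timeSharing, Fintype.sum_prod_type, ← Finset.sum_div, ← Finset.mul_sum, hP.2,
    hn.ne']

lemma Hof_timeSharing {τ : Type*} [Fintype τ] {P : Ω → ℝ} (hP : ∑ ω, P ω = 1) {n : ℕ}
    (hn : 0 < n) (g : Fin n → Ω → τ) :
    Hof (timeSharing n P) (fun w => (g w.2 w.1, w.2)) = log n + (∑ i, Hof P (g i)) / n := by
  have hpmap : ∀ t i, pmap (fun w => (g w.2 w.1, w.2)) (timeSharing n P) (t, i)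
      = (n : ℝ)⁻¹ * pmap (g i) P t := by
    intro t i
    simp only [pmap, timeSharing, Fintype.sum_prod_type, Prod.mk.injEq, Finset.mul_sum]
    refine Finset.sum_congr rfl fun ω _ => ?_
    rw [Finset.sum_eq_single i (fun j _ hj => by simp [hj]) (by simp)]
    simp [div_eq_inv_mul]
  rw [Hof, ent_eq_sum_negMulLog, Fintype.sum_prod_type, Finset.sum_comm]
  simp only [hpmap, negMulLog_mul, Finset.sum_add_distrib, ← Finset.sum_mul, ← Finset.mul_sum,
    sum_pmap, hP]
  simp [Hof, ent_eq_sum_negMulLog, negMulLog, log_inv]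
  field_simp

end TimeSharing

section SplitAtTime

variable {n : ℕ} {S : Type*}

def splitAtTime (n : ℕ) (S : Type*) :
    (Σ i : Fin n, {j // j ≠ i} → S) × S ≃ (Fin n → S) × Fin n :=
  ((Equiv.sigmaProdDistrib _ S).trans
    ((Equiv.sigmaCongrRight fun i => (Equiv.prodComm _ _).trans (Equiv.funSplitAt i S).symm).trans
      (Equiv.sigmaEquivProd _ _))).trans (Equiv.prodComm _ _)

lemma splitAtTime_apply (i : Fin n) (η : {j // j ≠ i} → S) (s : S) :
    splitAtTime n S (⟨i, η⟩, s) = ((Equiv.funSplitAt i S).symm (s, η), i) :=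
  rfl

lemma splitAtTime_current (w : (Σ i : Fin n, {j // j ≠ i} → S) × S) :
    (splitAtTime n S w).1 (splitAtTime n S w).2 = w.2 := by
  obtain ⟨⟨i, η⟩, s⟩ := w
  simp [splitAtTime_apply, Equiv.funSplitAt_symm_apply]

variable [Fintype S]

lemma timeSharing_iid_eq_pmap (p : S → ℝ) :
    timeSharing n (iid n p)
      = pmap (splitAtTime n S) (fun w => (∏ j, p (w.1.2 j)) / n * p w.2) := by
  refine (pmap_equiv_eq _ fun ⟨⟨i, η⟩, s⟩ => ?_).symm
  rw [splitAtTime_apply, timeSharing, iid, Fintype.prod_eq_mul_prod_subtype_ne _ i]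
  have hne (j : {j // j ≠ i}) : (j : Fin n) ≠ i := j.2
  simp [Equiv.funSplitAt_symm_apply, hne]
  ring

lemma pmap_current_timeSharing {p : S → ℝ} (hp : ∑ s, p s = 1) (hn : 0 < n) :
    pmap (fun w => w.1 w.2) (timeSharing n (iid n p)) = p := by
  rw [timeSharing_iid_eq_pmap, pmap_pmap]
  funext s
  simp [pmap, Fintype.sum_prod_type, splitAtTime_current, ← Finset.sum_mul, ← Finset.sum_div,
    Fintype.sum_sigma, ← Fintype.prod_sum, hp, hn.ne']

end SplitAtTime

section Past

variable {n : ℕ} {T : Type*}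

def past (k : ℕ) (ξ : Fin n → T) : Fin n → Option T :=
  fun j => if (j : ℕ) < k then some (ξ j) else none

lemma past_zero (ξ : Fin n → T) : past 0 ξ = fun _ => none := by
  funext j
  simp [past]

lemma past_eq_some_of_le {k : ℕ} (h : n ≤ k) (ξ : Fin n → T) :
    past k ξ = fun j => some (ξ j) := by
  funext j
  simp [past, j.2.trans_le h]

lemma past_apply_self (ξ : Fin n → T) (i : Fin n) : past i ξ i = none := by
  simp [past]

lemma past_succ (ξ : Fin n → T) (i : Fin n) :
    past (i + 1) ξ = update (past i ξ) i (some (ξ i)) := by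
  funext j
  rcases lt_trichotomy j i with h | rfl | h
  · simp [past, h.ne, Nat.lt_succ_of_lt (Fin.lt_def.1 h), Fin.lt_def.1 h]
  · simp [past]
  · simp [past, h.ne', not_lt.2 h.le, h]

lemma past_map {U : Type*} (k : ℕ) (ξ : Fin n → T) (h : T → U) :
    (fun j => (past k ξ j).map h) = past k (fun j => h (ξ j)) := by
  funext j
  by_cases hj : (j : ℕ) < k <;> simp [past, hj]

lemma past_map₂ {U : Type*} (k : ℕ) (ξ : Fin n → T) (ζ : Fin n → U) :
    (fun j => Option.map₂ Prod.mk (past k ξ j) (past k ζ j))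
      = past k (fun j => (ξ j, ζ j)) := by
  funext j
  by_cases hj : (j : ℕ) < k <;> simp [past, hj]

end Past

section TimeSharedAux

variable {n : ℕ} {S T K : Type*} [Fintype S] [Fintype T] [Fintype K]

/-- The auxiliary `(W(Cⁿ), C_{<Q}, Q)` of the converse, for the letters `C = c(S)` and the uniform
time index `Q = w.2` of `timeSharing`. -/
def timeSharedAux (c : S → T) (W : (Fin n → T) → K) (w : (Fin n → S) × Fin n) :
    K × (Fin n → Option T) × Fin n :=
  (W (fun j => c (w.1 j)), past w.2 (fun j => c (w.1 j)), w.2)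

variable {p : S → ℝ} (c : S → T) (W : (Fin n → T) → K)

lemma condIndep_timeSharedAux {D : Type*} [Fintype D] (d : S → D) :
    CondIndep (timeSharing n (iid n p)) (timeSharedAux c W) (fun w => d (w.1 w.2))
      (fun w => c (w.1 w.2)) := by
  -- Split the block at the time index: the auxiliary is a function of the current letter and of
  -- the other letters, which are independent of it.
  rw [timeSharing_iid_eq_pmap, condIndep_pmap_iff]
  convert condIndep_of_independent_noise (fun k : Σ i : Fin n, {j // j ≠ i} → S =>
      (∏ j, p (k.2 j)) / n) p (fun k t => timeSharedAux id W
        ((Equiv.funSplitAt k.1 T).symm (t, fun j => c (k.2 j)), k.1)) c d using 1 <;>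
    · funext ⟨⟨i, η⟩, s⟩
      simp [timeSharedAux, splitAtTime_apply, apply_dite]

lemma Hof_timeSharedAux (hp : ∑ s, p s = 1) (hn : 0 < n) :
    Hof (timeSharing n (iid n p)) (timeSharedAux c W) = log n +
      (∑ i : Fin n, Hof (iid n p)
        (fun ω => (W (fun j => c (ω j)), past i (fun j => c (ω j))))) / n := by
  refine (Hof_eq_of_inverse (f := timeSharedAux c W)
    (g := fun w => ((W (fun j => c (w.1 j)), past w.2 (fun j => c (w.1 j))), w.2))
    (fun t => ((t.1, t.2.1), t.2.2)) (fun t => (t.1.1, t.1.2, t.2)) (fun _ => rfl)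
    (fun _ => rfl)).trans ?_
  exact Hof_timeSharing (by rw [sum_iid, hp, one_pow]) hn
    (fun (i : Fin n) (ω : Fin n → S) => (W (fun j => c (ω j)), past i (fun j => c (ω j))))

lemma Hof_timeSharedAux_current (hp : ∑ s, p s = 1) (hn : 0 < n) :
    Hof (timeSharing n (iid n p)) (fun w => (timeSharedAux c W w, c (w.1 w.2))) = log n +
      (∑ i : Fin n, Hof (iid n p)
        (fun ω => (W (fun j => c (ω j)), past (i + 1) (fun j => c (ω j))))) / n := by
  -- The current letter is the entry that `past (i + 1)` adds to `past i`.
  rw [← Hof_comp_injective _ _ (injective_id.prodMap (Option.some_injective T))]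
  refine (Hof_eq_of_inverse
    (g := fun w => ((W (fun j => c (w.1 j)), past (w.2 + 1) (fun j => c (w.1 j))), w.2))
    (fun t => ((t.1.1, update t.1.2.1 t.1.2.2 t.2), t.1.2.2))
    (fun t => ((t.1.1, update t.1.2 t.2 none, t.2), t.1.2 t.2)) (fun w => ?_)
    (fun w => ?_)).trans ?_
  · simp [timeSharedAux, past_succ]
  · simp [timeSharedAux, past_succ, past_apply_self]
  exact Hof_timeSharing (by rw [sum_iid, hp, one_pow]) hn
    (fun (i : Fin n) (ω : Fin n → S) => (W (fun j => c (ω j)), past (i + 1) (fun j => c (ω j))))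

theorem MI_timeSharedAux (hp : ∑ s, p s = 1) (hn : 0 < n) :
    MI (timeSharing n (iid n p)) (timeSharedAux c W) (fun w => c (w.1 w.2))
      = Hof (iid n p) (fun ω => W (fun j => c (ω j))) / n := by
  set A : ℕ → ℝ := fun k =>
    Hof (iid n p) (fun ω => (W (fun j => c (ω j)), past k (fun j => c (ω j))))
  have hcurrent : Hof (timeSharing n (iid n p)) (fun w => c (w.1 w.2)) = Hof p c := by
    rw [← Hof_pmap, pmap_current_timeSharing hp hn]
  have hA_zero : A 0 = Hof (iid n p) (fun ω => W (fun j => c (ω j))) := by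
    simp only [A, past_zero]
    exact Hof_comp_injective _ _ (e := fun k => (k, fun _ : Fin n => (none : Option T)))
      fun _ _ h => congrArg Prod.fst h
  have hA_n : A n = n * Hof p c := by
    simp only [A, past_eq_some_of_le le_rfl]
    rw [Hof_comp_injective (iid n p) (fun ω j => c (ω j))
      (e := fun ξ => (W ξ, fun j => some (ξ j)))
      fun _ _ h => funext fun j => Option.some_injective _ (congrFun (congrArg Prod.snd h) j),
      Hof, pmap_iid, ent_iid (by rw [sum_pmap, hp]), Hof]
  have htelescope : ∑ i : Fin n, (A (i + 1) - A i) = A n - A 0 := by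
    rw [Fin.sum_univ_eq_sum_range (fun k => A (k + 1) - A k), Finset.sum_range_sub]
  rw [Finset.sum_sub_distrib] at htelescope
  rw [MI, Hof_timeSharedAux c W hp hn, hcurrent, Hof_timeSharedAux_current c W hp hn, ← hA_zero]
  have hn' : (n : ℝ) ≠ 0 := by exact_mod_cast hn.ne'
  field_simp
  linarith

theorem MI_timeSharedAux_prod {T' K' : Type*} [Fintype T'] [Fintype K'] (hp : ∑ s, p s = 1)
    (hn : 0 < n) (c' : S → T') (W' : (Fin n → T') → K') :
    MI (timeSharing n (iid n p)) (fun w => (timeSharedAux c W w, timeSharedAux c' W' w))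
        (fun w => (c (w.1 w.2), c' (w.1 w.2)))
      = Hof (iid n p) (fun ω => (W (fun j => c (ω j)), W' (fun j => c' (ω j)))) / n := by
  rw [MI_eq_of_inverse_left (g := timeSharedAux (fun s => (c s, c' s))
      (fun ξ => (W fun j => (ξ j).1, W' fun j => (ξ j).2))) _
    (fun t => ((t.1.1, t.2.1), fun j => Option.map₂ Prod.mk (t.1.2.1 j) (t.2.2.1 j), t.1.2.2))
    (fun t => ((t.1.1, fun j => (t.2.1 j).map Prod.fst, t.2.2),
      (t.1.2, fun j => (t.2.1 j).map Prod.snd, t.2.2)))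
    (fun w => by simp [timeSharedAux, past_map₂]) (fun w => by simp [timeSharedAux, past_map])]
  exact MI_timeSharedAux (fun s => (c s, c' s))
    (fun ξ => (W fun j => (ξ j).1, W' fun j => (ξ j).2)) hp hn

end TimeSharedAux

lemma Hof_div_le_of_log_card_le [Fintype α] {P : α → ℝ} (hP : IsPMF P) {n M : ℕ} (hn : 0 < n)
    (F : α → Fin M) {R : ℝ} (hM : log M ≤ n * R) : Hof P F / n ≤ R := by
  have hcard : Hof P F ≤ log (Fintype.card (Fin M)) := ent_le_log_card (hP.pmap F)
  rw [Fintype.card_fin] at hcard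
  rw [div_le_iff₀ (by exact_mod_cast hn)]
  linarith

/-- **Theorem 1, part `R ⊆ R_o`:** every achievable triple `(μ, R1, R2)` admits auxiliary
finitely supported random variables `U, V` jointly distributed with `(X, Z)` such that
`U – X – Z` and `X – Z – V` are Markov chains, `R1 ≥ I(U;X)`, `R2 ≥ I(V;Z)` and
`μ ≤ I(U;X) + I(V;Z) − I((U,V);(X,Z))`. -/
theorem two_source_outer_bound [Fintype 𝒳] [Fintype 𝒵]
    (p : 𝒳 × 𝒵 → ℝ) (hp : IsPMF p) (μ R1 R2 : ℝ)
    (hach : Achievable p μ R1 R2) :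
    ∃ (𝒰 𝒱 : Type) (_ : Fintype 𝒰) (_ : Fintype 𝒱) (q : 𝒰 × 𝒳 × 𝒵 × 𝒱 → ℝ),
      IsPMF q ∧
      -- the (X, Z)-marginal of the joint distribution is the source distribution
      pmap (fun w => (w.2.1, w.2.2.1)) q = p ∧
      -- Markov chain U – X – Z
      CondIndep q (fun w => w.1) (fun w => w.2.2.1) (fun w => w.2.1) ∧
      -- Markov chain X – Z – V
      CondIndep q (fun w => w.2.1) (fun w => w.2.2.2) (fun w => w.2.2.1) ∧
      MI q (fun w => w.1) (fun w => w.2.1) ≤ R1 ∧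
      MI q (fun w => w.2.2.2) (fun w => w.2.2.1) ≤ R2 ∧
      μ ≤ MI q (fun w => w.1) (fun w => w.2.1) + MI q (fun w => w.2.2.2) (fun w => w.2.2.1)
          - MI q (fun w => (w.1, w.2.2.2)) (fun w => (w.2.1, w.2.2.1)) := by
  obtain ⟨n, M1, M2, hn, hM1, hM2, f, g, hμ⟩ := hach
  have hMI_U := MI_timeSharedAux Prod.fst f hp.2 hn
  have hMI_V := MI_timeSharedAux Prod.snd g hp.2 hn
  have hMI_UV := MI_timeSharedAux_prod Prod.fst f hp.2 hn Prod.snd g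
  refine ⟨_, _, inferInstance, inferInstance, pmap (fun w => (timeSharedAux Prod.fst f w,
    (w.1 w.2).1, (w.1 w.2).2, timeSharedAux Prod.snd g w)) (timeSharing n (iid n p)),
    ((hp.iid n).timeSharing hn).pmap _, ?_, ?_, ?_, ?_, ?_, ?_⟩
  · rw [pmap_pmap]
    exact pmap_current_timeSharing hp.2 hn
  · rw [condIndep_pmap_iff]
    exact condIndep_timeSharedAux Prod.fst f Prod.snd
  · rw [condIndep_pmap_iff]
    exact (condIndep_timeSharedAux Prod.snd g Prod.fst).symm
  · rw [MI_pmap, hMI_U]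
    exact Hof_div_le_of_log_card_le (hp.iid n) hn _ hM1
  · rw [MI_pmap, hMI_V]
    exact Hof_div_le_of_log_card_le (hp.iid n) hn _ hM2
  · rw [MI_pmap, MI_pmap, MI_pmap, hMI_U, hMI_V, hMI_UV]
    rwa [MI, sub_div, add_div] at hμ

end Biclustering
end

section
/- (Theorem 1, part R_o ⊆ R_o'.) Let (U, X, Z, V) be finitely supported random variables such that U–X–Z and X–Z–V are Markov chains. Then I(U; X) + I(V; Z) − I((U,V); (X,Z)) ≤ I(U; Z) and I(U; X) + I(V; Z) − I((U,V); (X,Z)) ≤ I(V; X). -/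
open scoped BigOperators Classical

namespace Biclustering

variable {α β γ σ : Type*}

set_option linter.unusedSectionVars false
section Aux
variable [Fintype α] [Fintype β] [Fintype γ] [Fintype σ]

lemma pmap_nonneg (p : α → ℝ) (hp : ∀ a, 0 ≤ p a) (f : α → β) (b : β) : 0 ≤ pmap f p b := by
  unfold pmap
  exact Finset.sum_nonneg fun a _ => by split <;> simp [hp a]

lemma margA (p : α → ℝ) (f : α → β) (g : α → γ) (m : α → σ) (b : β) (s : σ) :
    ∑ c, pmap (fun a => (f a, g a, m a)) p (b, c, s) = pmap (fun a => (f a, m a)) p (b, s) := by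
  unfold pmap
  rw [Finset.sum_comm]
  refine Finset.sum_congr rfl fun a _ => ?_
  by_cases h1 : f a = b <;> by_cases h2 : m a = s <;>
    simp [Prod.ext_iff, h1, h2]

lemma margB (p : α → ℝ) (f : α → β) (g : α → γ) (m : α → σ) (c : γ) (s : σ) :
    ∑ b, pmap (fun a => (f a, g a, m a)) p (b, c, s) = pmap (fun a => (g a, m a)) p (c, s) := by
  unfold pmap
  rw [Finset.sum_comm]
  refine Finset.sum_congr rfl fun a _ => ?_
  by_cases h1 : g a = c <;> by_cases h2 : m a = s <;>
    simp [Prod.ext_iff, h1, h2]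

lemma margM (p : α → ℝ) (f : α → β) (m : α → σ) (s : σ) :
    ∑ b, pmap (fun a => (f a, m a)) p (b, s) = pmap m p s := by
  unfold pmap
  rw [Finset.sum_comm]
  refine Finset.sum_congr rfl fun a _ => ?_
  by_cases h2 : m a = s <;> simp [Prod.ext_iff, h2]

lemma margS (p : α → ℝ) (f : α → β) (g : α → γ) (m : α → σ) (s : σ) :
    ∑ b, ∑ c, pmap (fun a => (f a, g a, m a)) p (b, c, s) = pmap m p s := by
  calc ∑ b, ∑ c, pmap (fun a => (f a, g a, m a)) p (b, c, s)
      = ∑ b, pmap (fun a => (f a, m a)) p (b, s) :=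
        Finset.sum_congr rfl fun b _ => margA p f g m b s
    _ = pmap m p s := margM p f m s

lemma pointwise_le (P A B S : ℝ) (hP : 0 ≤ P) (hPA : P ≤ A) (hPB : P ≤ B) (hPS : P ≤ S)
    (hA : 0 ≤ A) (hB : 0 ≤ B) :
    P * Real.log A + P * Real.log B - P * Real.log S - P * Real.log P
      ≤ (if 0 < S then A * B / S else 0) - P := by
  rcases eq_or_lt_of_le hP with h0 | h0
  · rw [← h0]
    simp only [zero_mul, sub_zero, add_zero, zero_add, sub_self]
    split
    · positivity
    · simp
  · have hA' : 0 < A := h0.trans_le hPA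
    have hB' : 0 < B := h0.trans_le hPB
    have hS' : 0 < S := h0.trans_le hPS
    rw [if_pos hS']
    have key : Real.log (A * B / (S * P)) ≤ A * B / (S * P) - 1 :=
      Real.log_le_sub_one_of_pos (by positivity)
    have hlog : Real.log (A * B / (S * P))
        = Real.log A + Real.log B - Real.log S - Real.log P := by
      rw [Real.log_div (by positivity) (by positivity), Real.log_mul hA'.ne' hB'.ne',
        Real.log_mul hS'.ne' h0.ne']
      ring
    calc P * Real.log A + P * Real.log B - P * Real.log S - P * Real.log P
        = P * Real.log (A * B / (S * P)) := by rw [hlog]; ring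
      _ ≤ P * (A * B / (S * P) - 1) := mul_le_mul_of_nonneg_left key hP
      _ = A * B / S - P := by field_simp

lemma pointwise_eq (P A B S : ℝ) (hP : 0 ≤ P) (hPA : P ≤ A) (hPB : P ≤ B) (hPS : P ≤ S)
    (h : P * S = A * B) :
    P * Real.log P + P * Real.log S = P * Real.log A + P * Real.log B := by
  rcases eq_or_lt_of_le hP with h0 | h0
  · rw [← h0]; ring
  · have hA' : 0 < A := h0.trans_le hPA
    have hB' : 0 < B := h0.trans_le hPB
    have hS' : 0 < S := h0.trans_le hPS
    have hl : Real.log (P * S) = Real.log (A * B) := by rw [h]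
    rw [Real.log_mul h0.ne' hS'.ne', Real.log_mul hA'.ne' hB'.ne'] at hl
    nlinarith [hl]


lemma triple_sum_add (F G : β → γ → σ → ℝ) :
    ∑ b, ∑ c, ∑ s, (F b c s + G b c s)
      = (∑ b, ∑ c, ∑ s, F b c s) + (∑ b, ∑ c, ∑ s, G b c s) := by
  simp [Finset.sum_add_distrib]

lemma triple_sum_sub (F G : β → γ → σ → ℝ) :
    ∑ b, ∑ c, ∑ s, (F b c s - G b c s)
      = (∑ b, ∑ c, ∑ s, F b c s) - (∑ b, ∑ c, ∑ s, G b c s) := by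
  simp [Finset.sum_sub_distrib]

lemma triple_sum_comm (F : β → γ → σ → ℝ) :
    ∑ b, ∑ c, ∑ s, F b c s = ∑ s, ∑ b, ∑ c, F b c s :=
  calc ∑ b, ∑ c, ∑ s, F b c s
      = ∑ b, ∑ s, ∑ c, F b c s :=
        Finset.sum_congr rfl fun b _ => Finset.sum_comm
    _ = ∑ s, ∑ b, ∑ c, F b c s := Finset.sum_comm

/-- Common setup: rewrite the four entropies as triple sums. -/
lemma entropy_sums (p : α → ℝ) (f : α → β) (g : α → γ) (m : α → σ) :
    Hof p (fun a => (f a, g a, m a))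
        = - ∑ b, ∑ c, ∑ s, pmap (fun a => (f a, g a, m a)) p (b, c, s)
            * Real.log (pmap (fun a => (f a, g a, m a)) p (b, c, s)) ∧
    Hof p (fun a => (f a, m a))
        = - ∑ b, ∑ c, ∑ s, pmap (fun a => (f a, g a, m a)) p (b, c, s)
            * Real.log (pmap (fun a => (f a, m a)) p (b, s)) ∧
    Hof p (fun a => (g a, m a))
        = - ∑ b, ∑ c, ∑ s, pmap (fun a => (f a, g a, m a)) p (b, c, s)
            * Real.log (pmap (fun a => (g a, m a)) p (c, s)) ∧
    Hof p m
        = - ∑ b, ∑ c, ∑ s, pmap (fun a => (f a, g a, m a)) p (b, c, s)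
            * Real.log (pmap m p s) := by
  refine ⟨?_, ?_, ?_, ?_⟩
  · unfold Hof ent
    rw [Fintype.sum_prod_type]
    simp only [Fintype.sum_prod_type]
  · unfold Hof ent
    rw [Fintype.sum_prod_type]
    congr 1
    refine Finset.sum_congr rfl fun b _ => ?_
    rw [Finset.sum_comm]
    refine Finset.sum_congr rfl fun s _ => ?_
    rw [← margA p f g m b s, Finset.sum_mul]
  · unfold Hof ent
    rw [Fintype.sum_prod_type]
    congr 1
    calc ∑ c, ∑ s, pmap (fun a => (g a, m a)) p (c, s)
            * Real.log (pmap (fun a => (g a, m a)) p (c, s))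
        = ∑ c, ∑ s, ∑ b, pmap (fun a => (f a, g a, m a)) p (b, c, s)
            * Real.log (pmap (fun a => (g a, m a)) p (c, s)) := by
          refine Finset.sum_congr rfl fun c _ => Finset.sum_congr rfl fun s _ => ?_
          rw [← margB p f g m c s, Finset.sum_mul]
      _ = ∑ c, ∑ b, ∑ s, pmap (fun a => (f a, g a, m a)) p (b, c, s)
            * Real.log (pmap (fun a => (g a, m a)) p (c, s)) :=
          Finset.sum_congr rfl fun c _ => Finset.sum_comm
      _ = ∑ b, ∑ c, ∑ s, pmap (fun a => (f a, g a, m a)) p (b, c, s)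
            * Real.log (pmap (fun a => (g a, m a)) p (c, s)) := Finset.sum_comm
  · unfold Hof ent
    congr 1
    calc ∑ s, pmap m p s * Real.log (pmap m p s)
        = ∑ s, ∑ b, ∑ c, pmap (fun a => (f a, g a, m a)) p (b, c, s)
            * Real.log (pmap m p s) := by
          refine Finset.sum_congr rfl fun s _ => ?_
          rw [← margS p f g m s, Finset.sum_mul]
          exact Finset.sum_congr rfl fun b _ => by rw [Finset.sum_mul]
      _ = ∑ b, ∑ c, ∑ s, pmap (fun a => (f a, g a, m a)) p (b, c, s)
            * Real.log (pmap m p s) := (triple_sum_comm _).symm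

lemma pmap_triple_le_A (p : α → ℝ) (hp : ∀ a, 0 ≤ p a) (f : α → β) (g : α → γ) (m : α → σ)
    (b : β) (c : γ) (s : σ) :
    pmap (fun a => (f a, g a, m a)) p (b, c, s) ≤ pmap (fun a => (f a, m a)) p (b, s) := by
  rw [← margA p f g m b s]
  exact Finset.single_le_sum (fun c _ => pmap_nonneg p hp (fun a => (f a, g a, m a)) (b, c, s)) (Finset.mem_univ c)

lemma pmap_triple_le_B (p : α → ℝ) (hp : ∀ a, 0 ≤ p a) (f : α → β) (g : α → γ) (m : α → σ)
    (b : β) (c : γ) (s : σ) :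
    pmap (fun a => (f a, g a, m a)) p (b, c, s) ≤ pmap (fun a => (g a, m a)) p (c, s) := by
  rw [← margB p f g m c s]
  exact Finset.single_le_sum (fun b _ => pmap_nonneg p hp (fun a => (f a, g a, m a)) (b, c, s)) (Finset.mem_univ b)

lemma pmap_triple_le_S (p : α → ℝ) (hp : ∀ a, 0 ≤ p a) (f : α → β) (g : α → γ) (m : α → σ)
    (b : β) (c : γ) (s : σ) :
    pmap (fun a => (f a, g a, m a)) p (b, c, s) ≤ pmap m p s :=
  calc pmap (fun a => (f a, g a, m a)) p (b, c, s)
      ≤ pmap (fun a => (f a, m a)) p (b, s) := pmap_triple_le_A p hp f g m b c s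
    _ ≤ pmap m p s := by
        rw [← margM p f m s]
        exact Finset.single_le_sum (fun b _ => pmap_nonneg p hp (fun a => (f a, m a)) (b, s)) (Finset.mem_univ b)

/-- Markov entropy identity. -/
lemma markov_entropy (p : α → ℝ) (hp : ∀ a, 0 ≤ p a) (f : α → β) (g : α → γ) (m : α → σ)
    (h : CondIndep p f g m) :
    Hof p (fun a => (f a, g a, m a)) + Hof p m
      = Hof p (fun a => (f a, m a)) + Hof p (fun a => (g a, m a)) := by
  obtain ⟨e1, e2, e3, e4⟩ := entropy_sums p f g m
  rw [e1, e2, e3, e4]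
  have key : ∑ b, ∑ c, ∑ s, (pmap (fun a => (f a, g a, m a)) p (b, c, s)
        * Real.log (pmap (fun a => (f a, g a, m a)) p (b, c, s))
      + pmap (fun a => (f a, g a, m a)) p (b, c, s) * Real.log (pmap m p s))
      = ∑ b, ∑ c, ∑ s, (pmap (fun a => (f a, g a, m a)) p (b, c, s)
        * Real.log (pmap (fun a => (f a, m a)) p (b, s))
      + pmap (fun a => (f a, g a, m a)) p (b, c, s)
        * Real.log (pmap (fun a => (g a, m a)) p (c, s))) := by
    refine Finset.sum_congr rfl fun b _ => Finset.sum_congr rfl fun c _ =>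
      Finset.sum_congr rfl fun s _ => ?_
    exact pointwise_eq _ _ _ _ (pmap_nonneg p hp _ _)
      (pmap_triple_le_A p hp f g m b c s) (pmap_triple_le_B p hp f g m b c s)
      (pmap_triple_le_S p hp f g m b c s) (h b c s)
  rw [triple_sum_add, triple_sum_add] at key
  linarith

/-- Submodularity: nonnegativity of conditional mutual information. -/
lemma submod (p : α → ℝ) (hp : ∀ a, 0 ≤ p a) (f : α → β) (g : α → γ) (m : α → σ) :
    Hof p (fun a => (f a, g a, m a)) + Hof p m
      ≤ Hof p (fun a => (f a, m a)) + Hof p (fun a => (g a, m a)) := by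
  obtain ⟨e1, e2, e3, e4⟩ := entropy_sums p f g m
  rw [e1, e2, e3, e4]
  have key : ∀ s : σ, ∑ b, ∑ c,
      (pmap (fun a => (f a, g a, m a)) p (b, c, s)
          * Real.log (pmap (fun a => (f a, m a)) p (b, s))
        + pmap (fun a => (f a, g a, m a)) p (b, c, s)
          * Real.log (pmap (fun a => (g a, m a)) p (c, s))
        - pmap (fun a => (f a, g a, m a)) p (b, c, s) * Real.log (pmap m p s)
        - pmap (fun a => (f a, g a, m a)) p (b, c, s)
          * Real.log (pmap (fun a => (f a, g a, m a)) p (b, c, s)))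
      ≤ 0 := by
    intro s
    have step1 : ∀ b c,
        pmap (fun a => (f a, g a, m a)) p (b, c, s)
            * Real.log (pmap (fun a => (f a, m a)) p (b, s))
          + pmap (fun a => (f a, g a, m a)) p (b, c, s)
            * Real.log (pmap (fun a => (g a, m a)) p (c, s))
          - pmap (fun a => (f a, g a, m a)) p (b, c, s) * Real.log (pmap m p s)
          - pmap (fun a => (f a, g a, m a)) p (b, c, s)
            * Real.log (pmap (fun a => (f a, g a, m a)) p (b, c, s))
        ≤ (if 0 < pmap m p s then
              pmap (fun a => (f a, m a)) p (b, s) * pmap (fun a => (g a, m a)) p (c, s)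
                / pmap m p s else 0)
          - pmap (fun a => (f a, g a, m a)) p (b, c, s) := fun b c =>
      pointwise_le _ _ _ _ (pmap_nonneg p hp _ _)
        (pmap_triple_le_A p hp f g m b c s) (pmap_triple_le_B p hp f g m b c s)
        (pmap_triple_le_S p hp f g m b c s) (pmap_nonneg p hp _ _) (pmap_nonneg p hp _ _)
    refine le_trans (Finset.sum_le_sum fun b _ => Finset.sum_le_sum fun c _ => step1 b c) ?_
    by_cases hS : 0 < pmap m p s
    · simp only [if_pos hS]
      have : ∑ b, ∑ c, (pmap (fun a => (f a, m a)) p (b, s)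
            * pmap (fun a => (g a, m a)) p (c, s) / pmap m p s
          - pmap (fun a => (f a, g a, m a)) p (b, c, s)) = 0 := by
        have inner : ∀ b : β, ∑ c, (pmap (fun a => (f a, m a)) p (b, s)
              * pmap (fun a => (g a, m a)) p (c, s) / pmap m p s
            - pmap (fun a => (f a, g a, m a)) p (b, c, s)) = 0 := by
          intro b
          rw [Finset.sum_sub_distrib, margA p f g m b s]
          have : ∑ c, pmap (fun a => (f a, m a)) p (b, s)
              * pmap (fun a => (g a, m a)) p (c, s) / pmap m p s
              = pmap (fun a => (f a, m a)) p (b, s) := by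
            rw [← Finset.sum_div, ← Finset.mul_sum, margM p g m s, mul_div_assoc,
              div_self hS.ne', mul_one]
          rw [this, sub_self]
        simp [inner]
      rw [this]
    · simp only [if_neg hS]
      refine Finset.sum_nonpos fun b _ => Finset.sum_nonpos fun c _ => ?_
      have := pmap_nonneg p hp (fun a => (f a, g a, m a)) (b, c, s)
      linarith
  have hle : ∑ b, ∑ c, ∑ s,
      (pmap (fun a => (f a, g a, m a)) p (b, c, s)
          * Real.log (pmap (fun a => (f a, m a)) p (b, s))
        + pmap (fun a => (f a, g a, m a)) p (b, c, s)
          * Real.log (pmap (fun a => (g a, m a)) p (c, s))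
        - pmap (fun a => (f a, g a, m a)) p (b, c, s) * Real.log (pmap m p s)
        - pmap (fun a => (f a, g a, m a)) p (b, c, s)
          * Real.log (pmap (fun a => (f a, g a, m a)) p (b, c, s))) ≤ 0 := by
    rw [triple_sum_comm]
    exact Finset.sum_nonpos fun s _ => key s
  rw [triple_sum_sub, triple_sum_sub, triple_sum_add] at hle
  linarith


lemma inj_of_leftInv (e : β → γ) (r : γ → β) (h : ∀ b, r (e b) = b) : Function.Injective e :=
  Function.LeftInverse.injective h

lemma Hof_congr (p : α → ℝ) (f : α → β) (g : α → γ) (e : β → γ)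
    (he : Function.Injective e) (hfg : ∀ a, g a = e (f a)) : Hof p g = Hof p f := by
  unfold Hof ent
  congr 1
  have hval : ∀ b, pmap g p (e b) = pmap f p b := by
    intro b
    unfold pmap
    refine Finset.sum_congr rfl fun a _ => ?_
    simp [hfg a, he.eq_iff]
  have hzero : ∀ c, c ∉ Finset.univ.image e → pmap g p c = 0 := by
    intro c hc
    refine Finset.sum_eq_zero fun a _ => ?_
    rw [if_neg]
    intro h
    exact hc (Finset.mem_image.mpr ⟨f a, Finset.mem_univ _, by rw [← hfg a, h]⟩)
  calc ∑ c, pmap g p c * Real.log (pmap g p c)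
      = ∑ c ∈ Finset.univ.image e, pmap g p c * Real.log (pmap g p c) := by
        refine (Finset.sum_subset (Finset.subset_univ _) fun c _ hc => ?_).symm
        rw [hzero c hc]
        simp
    _ = ∑ b, pmap g p (e b) * Real.log (pmap g p (e b)) :=
        Finset.sum_image fun x _ y _ h => he h
    _ = ∑ b, pmap f p b * Real.log (pmap f p b) := by simp [hval]

end Aux

/-- **Theorem 1, part `R_o ⊆ R_o'`:** if `(U, X, Z, V)` are finitely supported random variables
such that `U – X – Z` and `X – Z – V` are Markov chains, then
`I(U;X) + I(V;Z) − I((U,V);(X,Z)) ≤ I(U;Z)` and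
`I(U;X) + I(V;Z) − I((U,V);(X,Z)) ≤ I(V;X)`. -/
theorem outer_bound_in_outer_bound_prime
    {𝒰 𝒳 𝒵 𝒱 : Type} [Fintype 𝒰] [Fintype 𝒳] [Fintype 𝒵] [Fintype 𝒱]
    (q : 𝒰 × 𝒳 × 𝒵 × 𝒱 → ℝ) (hq : IsPMF q)
    -- Markov chain U – X – Z
    (hUXZ : CondIndep q (fun w => w.1) (fun w => w.2.2.1) (fun w => w.2.1))
    -- Markov chain X – Z – V
    (hXZV : CondIndep q (fun w => w.2.1) (fun w => w.2.2.2) (fun w => w.2.2.1)) :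
    MI q (fun w => w.1) (fun w => w.2.1) + MI q (fun w => w.2.2.2) (fun w => w.2.2.1)
        - MI q (fun w => (w.1, w.2.2.2)) (fun w => (w.2.1, w.2.2.1))
      ≤ MI q (fun w => w.1) (fun w => w.2.2.1) ∧
    MI q (fun w => w.1) (fun w => w.2.1) + MI q (fun w => w.2.2.2) (fun w => w.2.2.1)
        - MI q (fun w => (w.1, w.2.2.2)) (fun w => (w.2.1, w.2.2.1))
      ≤ MI q (fun w => w.2.2.2) (fun w => w.2.1) := by
  have hp := hq.1
  -- Markov chain entropy identities
  have M1 : Hof q (fun w => (w.1, w.2.2.1, w.2.1)) + Hof q (fun w => w.2.1)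
      = Hof q (fun w => (w.1, w.2.1)) + Hof q (fun w => (w.2.2.1, w.2.1)) :=
    markov_entropy q hp _ _ _ hUXZ
  have M2 : Hof q (fun w => (w.2.1, w.2.2.2, w.2.2.1)) + Hof q (fun w => w.2.2.1)
      = Hof q (fun w => (w.2.1, w.2.2.1)) + Hof q (fun w => (w.2.2.2, w.2.2.1)) :=
    markov_entropy q hp _ _ _ hXZV
  -- Submodularity instances
  have S1 : Hof q (fun w => (w.1, w.2.2.1, w.2.2.2)) + Hof q (fun w => w.2.2.2)
      ≤ Hof q (fun w => (w.1, w.2.2.2)) + Hof q (fun w => (w.2.2.1, w.2.2.2)) :=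
    submod q hp _ _ _
  have S2 : Hof q (fun w => (w.2.1, w.2.2.2, w.1, w.2.2.1)) + Hof q (fun w => (w.1, w.2.2.1))
      ≤ Hof q (fun w => (w.2.1, w.1, w.2.2.1)) + Hof q (fun w => (w.2.2.2, w.1, w.2.2.1)) :=
    submod q hp _ _ _
  have S3 : Hof q (fun w => (w.2.1, w.2.2.2, w.1)) + Hof q (fun w => w.1)
      ≤ Hof q (fun w => (w.2.1, w.1)) + Hof q (fun w => (w.2.2.2, w.1)) :=
    submod q hp _ _ _
  have S4 : Hof q (fun w => (w.2.2.1, w.1, w.2.2.2, w.2.1)) + Hof q (fun w => (w.2.2.2, w.2.1))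
      ≤ Hof q (fun w => (w.2.2.1, w.2.2.2, w.2.1)) + Hof q (fun w => (w.1, w.2.2.2, w.2.1)) :=
    submod q hp _ _ _
  -- Permutation identities between entropies
  have E1 : Hof q (fun w => (w.2.2.1, w.2.1)) = Hof q (fun w => (w.2.1, w.2.2.1)) :=
    Hof_congr q _ _ (fun p => (p.2, p.1))
      (inj_of_leftInv _ (fun p => (p.2, p.1)) fun _ => rfl) fun w => rfl
  have E2 : Hof q (fun w => (w.2.1, w.2.2.2, w.1, w.2.2.1))
      = Hof q (fun w => ((w.1, w.2.2.2), (w.2.1, w.2.2.1))) :=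
    Hof_congr q _ _ (fun p => (p.2.1, p.1.2, p.1.1, p.2.2))
      (inj_of_leftInv _ (fun t => ((t.2.2.1, t.2.1), (t.1, t.2.2.2))) fun _ => rfl) fun w => rfl
  have E3 : Hof q (fun w => (w.2.1, w.1, w.2.2.1)) = Hof q (fun w => (w.1, w.2.2.1, w.2.1)) :=
    Hof_congr q _ _ (fun p => (p.2.2, p.1, p.2.1))
      (inj_of_leftInv _ (fun t => (t.2.1, t.2.2, t.1)) fun _ => rfl) fun w => rfl
  have E4 : Hof q (fun w => (w.2.2.2, w.1, w.2.2.1)) = Hof q (fun w => (w.1, w.2.2.1, w.2.2.2)) :=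
    Hof_congr q _ _ (fun p => (p.2.2, p.1, p.2.1))
      (inj_of_leftInv _ (fun t => (t.2.1, t.2.2, t.1)) fun _ => rfl) fun w => rfl
  have E5 : Hof q (fun w => (w.2.2.1, w.2.2.2)) = Hof q (fun w => (w.2.2.2, w.2.2.1)) :=
    Hof_congr q _ _ (fun p => (p.2, p.1))
      (inj_of_leftInv _ (fun p => (p.2, p.1)) fun _ => rfl) fun w => rfl
  have E6 : Hof q (fun w => (w.2.2.1, w.1, w.2.2.2, w.2.1))
      = Hof q (fun w => ((w.1, w.2.2.2), (w.2.1, w.2.2.1))) :=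
    Hof_congr q _ _ (fun p => (p.2.2, p.1.1, p.1.2, p.2.1))
      (inj_of_leftInv _ (fun t => ((t.2.1, t.2.2.1), (t.2.2.2, t.1))) fun _ => rfl) fun w => rfl
  have E7 : Hof q (fun w => (w.2.2.1, w.2.2.2, w.2.1))
      = Hof q (fun w => (w.2.1, w.2.2.2, w.2.2.1)) :=
    Hof_congr q _ _ (fun p => (p.2.2, p.2.1, p.1))
      (inj_of_leftInv _ (fun t => (t.2.2, t.2.1, t.1)) fun _ => rfl) fun w => rfl
  have E8 : Hof q (fun w => (w.1, w.2.2.2, w.2.1)) = Hof q (fun w => (w.2.1, w.2.2.2, w.1)) :=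
    Hof_congr q _ _ (fun p => (p.2.2, p.2.1, p.1))
      (inj_of_leftInv _ (fun t => (t.2.2, t.2.1, t.1)) fun _ => rfl) fun w => rfl
  have E9 : Hof q (fun w => (w.2.1, w.1)) = Hof q (fun w => (w.1, w.2.1)) :=
    Hof_congr q _ _ (fun p => (p.2, p.1))
      (inj_of_leftInv _ (fun p => (p.2, p.1)) fun _ => rfl) fun w => rfl
  have E10 : Hof q (fun w => (w.2.2.2, w.1)) = Hof q (fun w => (w.1, w.2.2.2)) :=
    Hof_congr q _ _ (fun p => (p.2, p.1))
      (inj_of_leftInv _ (fun p => (p.2, p.1)) fun _ => rfl) fun w => rfl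
  simp only [MI]
  constructor
  · linarith
  · linarith

end Biclustering
end

section
/- For all α ∈ (0, 1/2) and p ∈ (0, 1/2), (log 2 − h_b(α∗p)) / (log 2 − h_b(p)) > 1 − h_b(α)/log 2; equivalently, log 2 · (log 2 − h_b(α∗p)) > (log 2 − h_b(p)) · (log 2 − h_b(α)). -/
/-!
Put `t = (1 - x) / 2`. Then `log 2 - h_b(t) = ∑ cₖ (x²)^(k+1)` with `cₖ = 1 / ((2k+1)(2k+2)) > 0`,
and `∑ cₖ = log 2` is the alternating harmonic series. Since `1 - 2(α∗p) = (1 - 2α)(1 - 2p)`,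
the inequality is Chebyshev's sum inequality `(∑ cₖ aₖ)(∑ cₖ bₖ) < (∑ cₖ)(∑ cₖ aₖ bₖ)` for the
similarly ordered sequences `aₖ = (x²)^(k+1)`, `bₖ = (y²)^(k+1)`.
-/

open Real Filter Topology Finset

namespace Biclustering

/-- The binary entropy function (natural logarithm). -/
noncomputable def hb (t : ℝ) : ℝ := -(t * Real.log t) - (1 - t) * Real.log (1 - t)

/-- Binary convolution `a ∗ b = a(1−b) + (1−a)b`. -/
def bstar (a b : ℝ) : ℝ := a * (1 - b) + (1 - a) * b

theorem _root_.Monovary.hasSum_mul_hasSum_lt {ι : Type*} {w a b : ι → ℝ} {W A B D : ℝ}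
    (hw₀ : 0 ≤ w) (ha₀ : 0 ≤ a) (hb₀ : 0 ≤ b) (hab : Monovary a b)
    (hW : HasSum w W) (hA : HasSum (fun k => w k * a k) A) (hB : HasSum (fun k => w k * b k) B)
    (hD : HasSum (fun k => w k * (a k * b k)) D)
    {i j : ι} (hwi : 0 < w i) (hwj : 0 < w j) (haij : a i < a j) (hbij : b i < b j) :
    A * B < W * D := by
  have hWD := hW.mul hD <| hW.summable.mul_of_nonneg hD.summable hw₀ fun k =>
    mul_nonneg (hw₀ k) (mul_nonneg (ha₀ k) (hb₀ k))
  have hAB := hA.mul hB <| hA.summable.mul_of_nonneg hB.summable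
    (fun k => mul_nonneg (hw₀ k) (ha₀ k)) fun k => mul_nonneg (hw₀ k) (hb₀ k)
  have hT := hWD.sub hAB
  -- symmetrizing the double series of `W * D - A * B` makes every term nonnegative
  have hS : HasSum (fun kl : ι × ι => w kl.1 * w kl.2 * ((a kl.2 - a kl.1) * (b kl.2 - b kl.1)))
      (2 * (W * D - A * B)) := by
    have h := hT.add ((Equiv.prodComm ι ι).hasSum_iff.mpr hT)
    rw [← two_mul] at h
    refine h.congr_fun fun kl => ?_
    simp only [Function.comp_apply, Equiv.prodComm_apply, Prod.fst_swap, Prod.snd_swap]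
    ring
  have hle := le_hasSum hS (i, j) fun kl _ =>
    mul_nonneg (mul_nonneg (hw₀ _) (hw₀ _)) (hab.sub_mul_sub_nonneg _ _)
  have hpos : 0 < w i * w j * ((a j - a i) * (b j - b i)) :=
    mul_pos (mul_pos hwi hwj) (mul_pos (sub_pos.2 haij) (sub_pos.2 hbij))
  linarith

noncomputable def entropyCoeff (k : ℕ) : ℝ := 1 / ((2 * k + 1) * (2 * k + 2))

lemma entropyCoeff_pos (k : ℕ) : 0 < entropyCoeff k := by
  unfold entropyCoeff; positivity

lemma sum_range_entropyCoeff (n : ℕ) :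
    ∑ k ∈ range n, entropyCoeff k = ((harmonic (2 * n) - harmonic n : ℚ) : ℝ) := by
  induction n with
  | zero => simp
  | succ n ih =>
    rw [sum_range_succ, ih, show 2 * (n + 1) = 2 * n + 1 + 1 by ring, harmonic_succ,
      harmonic_succ, harmonic_succ, entropyCoeff]
    push_cast
    field_simp
    ring

lemma tendsto_harmonic_two_mul_sub_harmonic :
    Tendsto (fun n : ℕ => ((harmonic (2 * n) - harmonic n : ℚ) : ℝ)) atTop (𝓝 (log 2)) := by
  have h2n := tendsto_harmonic_sub_log.comp (tendsto_id.const_mul_atTop' two_pos)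
  have h := (h2n.sub tendsto_harmonic_sub_log).add_const (log 2)
  rw [sub_self, zero_add] at h
  refine h.congr' ?_
  filter_upwards [eventually_ne_atTop 0] with n hn
  simp only [id_eq, Function.comp_apply, Nat.cast_mul, Nat.cast_ofNat, Rat.cast_sub,
    log_mul two_ne_zero (Nat.cast_ne_zero.2 hn)]
  ring

lemma hasSum_entropyCoeff : HasSum entropyCoeff (log 2) := by
  rw [hasSum_iff_tendsto_nat_of_nonneg fun k => (entropyCoeff_pos k).le]
  simpa only [sum_range_entropyCoeff] using tendsto_harmonic_two_mul_sub_harmonic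

lemma hasSum_entropyCoeff_mul_pow {x : ℝ} (hx : |x| < 1) :
    HasSum (fun k : ℕ => entropyCoeff k * (x ^ 2) ^ (k + 1)) (log 2 - hb ((1 - x) / 2)) := by
  have hsq : |x ^ 2| < 1 := by rwa [abs_of_nonneg (sq_nonneg x), sq_lt_one_iff_abs_lt_one]
  have h1 : 0 < 1 - x := by linarith [le_abs_self x]
  have h2 : 0 < 1 + x := by linarith [neg_abs_le x]
  have h := ((hasSum_log_sub_log_of_abs_lt_one hx).mul_left (x / 2)).sub
    ((hasSum_pow_div_log_of_abs_lt_one hsq).mul_left (1 / 2))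
  have hval : log 2 - hb ((1 - x) / 2) =
      x / 2 * (log (1 + x) - log (1 - x)) - 1 / 2 * -log (1 - x ^ 2) := by
    rw [hb, show 1 - (1 - x) / 2 = (1 + x) / 2 by ring, log_div h1.ne' two_ne_zero,
      log_div h2.ne' two_ne_zero, show 1 - x ^ 2 = (1 - x) * (1 + x) by ring,
      log_mul h1.ne' h2.ne']
    ring
  refine hval ▸ h.congr_fun fun k => ?_
  rw [entropyCoeff]
  field_simp
  ring

lemma log_two_sub_hb_pos {x : ℝ} (hx0 : x ≠ 0) (hx : |x| < 1) : 0 < log 2 - hb ((1 - x) / 2) :=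
  hasSum_lt (f := 0) (i := 0) (fun k => (mul_pos (entropyCoeff_pos k) (by positivity)).le)
    (mul_pos (entropyCoeff_pos 0) (by positivity)) hasSum_zero (hasSum_entropyCoeff_mul_pow hx)

lemma log_two_sub_hb_mul_lt {x y : ℝ} (hx0 : x ≠ 0) (hx : |x| < 1) (hy0 : y ≠ 0) (hy : |y| < 1) :
    (log 2 - hb ((1 - x) / 2)) * (log 2 - hb ((1 - y) / 2)) <
      log 2 * (log 2 - hb ((1 - x * y) / 2)) := by
  have hxy : |x * y| < 1 := by
    rw [abs_mul]; nlinarith [abs_nonneg x, abs_nonneg y]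
  have hD := hasSum_entropyCoeff_mul_pow hxy
  simp only [mul_pow] at hD
  have hx2 : 0 < x ^ 2 := by positivity
  have hy2 : 0 < y ^ 2 := by positivity
  have hx2' : x ^ 2 < 1 := (sq_lt_one_iff_abs_lt_one x).2 hx
  have hy2' : y ^ 2 < 1 := (sq_lt_one_iff_abs_lt_one y).2 hy
  have anti {s : ℝ} (h0 : 0 ≤ s) (h1 : s ≤ 1) : Antitone fun k : ℕ => s ^ (k + 1) :=
    (pow_right_anti₀ h0 h1).comp_monotone fun _ _ hkl => Nat.succ_le_succ hkl
  exact Monovary.hasSum_mul_hasSum_lt (fun k => (entropyCoeff_pos k).le)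
    (fun k => by positivity) (fun k => by positivity)
    ((anti hx2.le hx2'.le).monovary (anti hy2.le hy2'.le))
    hasSum_entropyCoeff (hasSum_entropyCoeff_mul_pow hx) (hasSum_entropyCoeff_mul_pow hy) hD
    (entropyCoeff_pos 1) (entropyCoeff_pos 0)
    (pow_lt_pow_right_of_lt_one₀ hx2 hx2' one_lt_two)
    (pow_lt_pow_right_of_lt_one₀ hy2 hy2' one_lt_two)

lemma bstar_half_sub_half_sub (x y : ℝ) :
    bstar ((1 - x) / 2) ((1 - y) / 2) = (1 - x * y) / 2 := by
  rw [bstar]; ring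

/-- For all `α, p ∈ (0, 1/2)`,
`(log 2 − h_b(α∗p)) / (log 2 − h_b(p)) > 1 − h_b(α)/log 2`; equivalently,
`log 2 · (log 2 − h_b(α∗p)) > (log 2 − h_b(p)) · (log 2 − h_b(α))`. -/
theorem binary_entropy_inequality
    (α p : ℝ) (hα0 : 0 < α) (hα1 : α < 1 / 2) (hp0 : 0 < p) (hp1 : p < 1 / 2) :
    (Real.log 2 - hb (bstar α p)) / (Real.log 2 - hb p) > 1 - hb α / Real.log 2 ∧
    Real.log 2 * (Real.log 2 - hb (bstar α p))
      > (Real.log 2 - hb p) * (Real.log 2 - hb α) := by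
  obtain ⟨x, rfl⟩ : ∃ x, α = (1 - x) / 2 := ⟨1 - 2 * α, by ring⟩
  obtain ⟨y, rfl⟩ : ∃ y, p = (1 - y) / 2 := ⟨1 - 2 * p, by ring⟩
  have hx0 : x ≠ 0 := (by linarith : 0 < x).ne'
  have hy0 : y ≠ 0 := (by linarith : 0 < y).ne'
  have hx : |x| < 1 := abs_lt.2 ⟨by linarith, by linarith⟩
  have hy : |y| < 1 := abs_lt.2 ⟨by linarith, by linarith⟩
  have key := log_two_sub_hb_mul_lt hx0 hx hy0 hy
  have hpos := log_two_sub_hb_pos hy0 hy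
  have hlog := log_pos one_lt_two
  rw [bstar_half_sub_half_sub]
  refine ⟨?_, by linarith⟩
  rw [gt_iff_lt, lt_div_iff₀ hpos, one_sub_div hlog.ne', div_mul_eq_mul_div, div_lt_iff₀ hlog]
  linarith

end Biclustering
end
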